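/- Let d ≥ 1, let Ω ⊆ ℝ^d be a bounded open set, let f : ℝ^d → ℝ^d be C¹ and D : ℝ^d → ℝ^{d×d} be C², and suppose: (i) ∑_{i,j} D_{ij}(x) ξ_i ξ_j ≥ C_D |ξ|² for all x ∈ Ω and ξ ∈ ℝ^d, where C_D > 0; (ii) C_P > 0 satisfies ∫_Ω u² dx ≤ C_P ∫_Ω |∇u|² dx for every C¹ function u compactly supported in Ω; (iii) with b_i = (1/2) ∑_{j=1}^d ∂_{x_j} D_{ij} − f_i, there is a constant C₀ > 0 such that C_D/C_P − (∇·b)(x) ≥ C₀ for all x ∈ Ω. Let p and p_N be C² functions with compact support contained in Ω such that ℒp = 0 on Ω, where ℒq = −∑_{i=1}^d ∂_{x_i}(f_i q) + (1/2) ∑_{i,j=1}^d ∂_{x_i}∂_{x_j}(D_{ij} q). Then C₀² ∫_Ω (p(x) − p_N(x))² dx ≤ 4 ∫_Ω (ℒp_N)(x)² dx. -/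

import Mathlib

/-! Let `e = p - p_N`, a `C²` function supported in `Ω`. Writing `ℒ` in divergence form
`ℒq = ∑ᵢ ∂ᵢ(½ ∑ⱼ ∂ⱼ(Dᵢⱼ q) - fᵢ q)` and integrating by parts twice (using `e ∂ᵢe = ½ ∂ᵢ(e²)`)
gives the energy identity `∫ e ℒe = ½ ∫ (∇·b) e² - ½ ∫ ∇e·D∇e`. Ellipticity and the Poincaré
inequality bound the diffusion term below by `(C_D / C_P) ∫ e²`, so the gap condition yields
`∫ e ℒe ≤ -(C₀/2) ∫ e²`. Since `ℒe = -ℒp_N` on `Ω`, Young's inequality gives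
`(C₀/2) ∫ e² ≤ ∫ e ℒp_N ≤ (C₀/4) ∫ e² + (1/C₀) ∫ (ℒp_N)²`. -/

open MeasureTheory

/-- Partial derivative in the `i`-th coordinate direction. -/
noncomputable def pd {d : ℕ} (i : Fin d) (g : (Fin d → ℝ) → ℝ) : (Fin d → ℝ) → ℝ :=
  fun x => fderiv ℝ g x (Pi.single i 1)

/-- The Fokker-Planck operator `ℒq = -∑ᵢ ∂ᵢ(fᵢ q) + (1/2) ∑ᵢⱼ ∂ᵢ∂ⱼ(Dᵢⱼ q)`. -/
noncomputable def fokkerPlanck {d : ℕ} (f : (Fin d → ℝ) → Fin d → ℝ)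
    (D : (Fin d → ℝ) → Fin d → Fin d → ℝ) (q : (Fin d → ℝ) → ℝ) : (Fin d → ℝ) → ℝ :=
  fun x => -(∑ i, pd i (fun y => f y i * q y) x)
    + (1 / 2) * ∑ i, ∑ j, pd i (pd j (fun y => D y i j * q y)) x

/-- The vector field `bᵢ = (1/2) ∑ⱼ ∂ⱼ Dᵢⱼ - fᵢ`. -/
noncomputable def bvec {d : ℕ} (f : (Fin d → ℝ) → Fin d → ℝ)
    (D : (Fin d → ℝ) → Fin d → Fin d → ℝ) : (Fin d → ℝ) → Fin d → ℝ :=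
  fun x i => (1 / 2) * ∑ j, pd j (fun y => D y i j) x - f x i

/-- The divergence `∇·b = ∑ᵢ ∂ᵢ bᵢ` of the vector field `b`. -/
noncomputable def divb {d : ℕ} (f : (Fin d → ℝ) → Fin d → ℝ)
    (D : (Fin d → ℝ) → Fin d → Fin d → ℝ) : (Fin d → ℝ) → ℝ :=
  fun x => ∑ i, pd i (fun y => bvec f D y i) x


open Function

section PartialDerivative

variable {d : ℕ} {g h : (Fin d → ℝ) → ℝ} {x : Fin d → ℝ}

lemma ContDiff.pd {n : ℕ} (i : Fin d) (hg : ContDiff ℝ (n + 1) g) : ContDiff ℝ n (pd i g) :=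
  (hg.fderiv_right (m := n) (by norm_cast)).clm_apply contDiff_const

lemma pd_of_notMem_tsupport (i : Fin d) (hx : x ∉ tsupport g) : pd i g x = 0 := by
  simp [pd, fderiv_of_notMem_tsupport ℝ hx]

lemma tsupport_pd_subset (i : Fin d) (g : (Fin d → ℝ) → ℝ) : tsupport (pd i g) ⊆ tsupport g :=
  tsupport_fderiv_apply_subset ℝ _

lemma HasCompactSupport.pd (i : Fin d) (hg : HasCompactSupport g) : HasCompactSupport (pd i g) :=
  hg.fderiv_apply ℝ _

lemma pd_mul (i : Fin d) (hg : DifferentiableAt ℝ g x) (hh : DifferentiableAt ℝ h x) :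
    pd i (fun y => g y * h y) x = pd i g x * h x + g x * pd i h x := by
  simp [pd, fderiv_fun_mul hg hh]
  ring

lemma pd_sub (i : Fin d) (hg : DifferentiableAt ℝ g x) (hh : DifferentiableAt ℝ h x) :
    pd i (fun y => g y - h y) x = pd i g x - pd i h x := by
  simp [pd, fderiv_fun_sub hg hh]

lemma pd_const_mul (i : Fin d) (c : ℝ) (hg : DifferentiableAt ℝ g x) :
    pd i (fun y => c * g y) x = c * pd i g x := by
  simp [pd, fderiv_const_mul hg c]

lemma pd_sum {ι : Type*} (s : Finset ι) (i : Fin d) {G : ι → (Fin d → ℝ) → ℝ}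
    (hG : ∀ j ∈ s, DifferentiableAt ℝ (G j) x) :
    pd i (fun y => ∑ j ∈ s, G j y) x = ∑ j ∈ s, pd i (G j) x := by
  simp [pd, fderiv_fun_sum hG]

lemma integral_mul_pd (i : Fin d) (hg : ContDiff ℝ 1 g) (hh : ContDiff ℝ 1 h)
    (hhs : HasCompactSupport h) :
    ∫ x, g x * pd i h x = -∫ x, pd i g x * h x := by
  have hg' : Continuous (pd i g) := (hg.pd (n := 0) i).continuous
  have hh' : Continuous (pd i h) := (hh.pd (n := 0) i).continuous
  exact integral_mul_fderiv_eq_neg_fderiv_mul_of_integrable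
    ((hg'.mul hh.continuous).integrable_of_hasCompactSupport hhs.mul_left)
    ((hg.continuous.mul hh').integrable_of_hasCompactSupport (hhs.pd i).mul_left)
    ((hg.continuous.mul hh.continuous).integrable_of_hasCompactSupport hhs.mul_left)
    (fun x _ => hg.differentiable_one.differentiableAt)
    (fun x _ => hh.differentiable_one.differentiableAt)

lemma integral_mul_mul_pd_self (i : Fin d) (hg : ContDiff ℝ 1 g) (hh : ContDiff ℝ 1 h)
    (hhs : HasCompactSupport h) :
    ∫ x, g x * (h x * pd i h x) = -(1 / 2) * ∫ x, pd i g x * h x ^ 2 := by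
  have hdiff : Differentiable ℝ h := hh.differentiable_one
  have hsq : (fun x => g x * pd i (fun y => h y * h y) x)
      = fun x => 2 * (g x * (h x * pd i h x)) := funext fun x => by
    rw [pd_mul i (hdiff x) (hdiff x)]; ring
  have hibp := integral_mul_pd i hg (hh.mul hh) hhs.mul_left
  rw [hsq, integral_const_mul] at hibp
  simp only [← sq] at hibp
  linarith

end PartialDerivative

lemma Continuous.integrable_of_eq_zero_off_tsupport {X E β : Type*} [TopologicalSpace X]
    [MeasurableSpace X] [OpensMeasurableSpace X] {μ : Measure X} [IsFiniteMeasureOnCompacts μ]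
    [NormedAddCommGroup E] [Zero β] {g : X → E} {q : X → β}
    (hg : Continuous g) (hq : HasCompactSupport q) (h : ∀ x ∉ tsupport q, g x = 0) :
    Integrable g μ :=
  hg.integrable_of_hasCompactSupport (hq.mono' (support_subset_iff'.2 h))

section FokkerPlanck

variable {d : ℕ} {f : (Fin d → ℝ) → Fin d → ℝ} {D : (Fin d → ℝ) → Fin d → Fin d → ℝ}
  {p q : (Fin d → ℝ) → ℝ}

/-- The flux `Jᵢ` of the divergence form `ℒq = ∑ᵢ ∂ᵢJᵢ` of the Fokker-Planck operator. -/
noncomputable def fokkerPlanckFlux (f : (Fin d → ℝ) → Fin d → ℝ)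
    (D : (Fin d → ℝ) → Fin d → Fin d → ℝ) (q : (Fin d → ℝ) → ℝ) (i : Fin d) :
    (Fin d → ℝ) → ℝ :=
  fun x => (1 / 2) * ∑ j, pd j (fun y => D y i j * q y) x - f x i * q x

lemma contDiff_fokkerPlanckFlux (hf : ContDiff ℝ 1 f) (hD : ContDiff ℝ 2 D)
    (hq : ContDiff ℝ 2 q) (i : Fin d) : ContDiff ℝ 1 (fokkerPlanckFlux f D q i) :=
  (contDiff_const.mul (ContDiff.sum fun j _ =>
    ((contDiff_pi.1 (contDiff_pi.1 hD i) j).mul hq).pd (n := 1) j)).sub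
    ((contDiff_pi.1 hf i).mul (hq.of_le (by norm_num)))

lemma hasCompactSupport_fokkerPlanckFlux (hq : HasCompactSupport q) (i : Fin d) :
    HasCompactSupport (fokkerPlanckFlux f D q i) := by
  refine hq.mono' (support_subset_iff'.2 fun x hx => ?_)
  have hDq : ∀ j, pd j (fun y => D y i j * q y) x = 0 := fun j =>
    pd_of_notMem_tsupport j fun h => hx (tsupport_mul_subset_right h)
  simp [fokkerPlanckFlux, hDq, image_eq_zero_of_notMem_tsupport hx]

lemma fokkerPlanck_eq_sum_pd_flux (hf : ContDiff ℝ 1 f) (hD : ContDiff ℝ 2 D)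
    (hq : ContDiff ℝ 2 q) (x : Fin d → ℝ) :
    fokkerPlanck f D q x = ∑ i, pd i (fokkerPlanckFlux f D q i) x := by
  have hterm : ∀ i, pd i (fokkerPlanckFlux f D q i) x
      = (1 / 2) * ∑ j, pd i (pd j (fun y => D y i j * q y)) x
        - pd i (fun y => f y i * q y) x := fun i => by
    have hDq : ∀ j, ContDiff ℝ 1 (pd j (fun y => D y i j * q y)) := fun j =>
      ((contDiff_pi.1 (contDiff_pi.1 hD i) j).mul hq).pd (n := 1) j
    have hsum : ContDiff ℝ 1 fun y => ∑ j, pd j (fun z => D z i j * q z) y :=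
      ContDiff.sum fun j _ => hDq j
    unfold fokkerPlanckFlux
    rw [pd_sub i ((contDiff_const.mul hsum).differentiable_one x)
        (((contDiff_pi.1 hf i).mul (hq.of_le (by norm_num))).differentiable_one x),
      pd_const_mul i _ (hsum.differentiable_one x),
      pd_sum _ i fun j _ => (hDq j).differentiable_one x]
  simp only [fokkerPlanck, hterm, Finset.sum_sub_distrib, ← Finset.mul_sum]
  ring

lemma fokkerPlanckFlux_eq (hD : ContDiff ℝ 2 D) (hq : Differentiable ℝ q) (i : Fin d)
    (x : Fin d → ℝ) :
    fokkerPlanckFlux f D q i x = bvec f D x i * q x + (1 / 2) * ∑ j, D x i j * pd j q x := by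
  have hDq : ∀ j, pd j (fun y => D y i j * q y) x
      = pd j (fun y => D y i j) x * q x + D x i j * pd j q x := fun j =>
    pd_mul j ((contDiff_pi.1 (contDiff_pi.1 hD i) j).differentiable (by norm_num) x) (hq x)
  simp only [fokkerPlanckFlux, bvec, hDq, Finset.sum_add_distrib, ← Finset.sum_mul]
  ring

lemma contDiff_bvec (hf : ContDiff ℝ 1 f) (hD : ContDiff ℝ 2 D) (i : Fin d) :
    ContDiff ℝ 1 fun x => bvec f D x i :=
  (contDiff_const.mul (ContDiff.sum fun j _ =>
    (contDiff_pi.1 (contDiff_pi.1 hD i) j).pd (n := 1) j)).sub (contDiff_pi.1 hf i)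

lemma fokkerPlanck_of_notMem_tsupport {x : Fin d → ℝ} (hx : x ∉ tsupport q) :
    fokkerPlanck f D q x = 0 := by
  have hf : ∀ i, pd i (fun y => f y i * q y) x = 0 := fun i =>
    pd_of_notMem_tsupport i fun h => hx (tsupport_mul_subset_right h)
  have hD : ∀ i j, pd i (pd j (fun y => D y i j * q y)) x = 0 := fun i j =>
    pd_of_notMem_tsupport i fun h =>
      hx (tsupport_mul_subset_right (tsupport_pd_subset j _ h))
  simp [fokkerPlanck, hf, hD]

lemma fokkerPlanckFlux_sub (hD : ContDiff ℝ 2 D) (hp : Differentiable ℝ p)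
    (hq : Differentiable ℝ q) (i : Fin d) :
    fokkerPlanckFlux f D (fun y => p y - q y) i
      = fun x => fokkerPlanckFlux f D p i x - fokkerPlanckFlux f D q i x := by
  ext x
  rw [fokkerPlanckFlux_eq (q := fun y => p y - q y) hD (hp.sub hq), fokkerPlanckFlux_eq hD hp,
    fokkerPlanckFlux_eq hD hq]
  simp only [pd_sub _ (hp x) (hq x), mul_sub, Finset.sum_sub_distrib]
  ring

lemma fokkerPlanck_sub (hf : ContDiff ℝ 1 f) (hD : ContDiff ℝ 2 D) (hp : ContDiff ℝ 2 p)
    (hq : ContDiff ℝ 2 q) (x : Fin d → ℝ) :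
    fokkerPlanck f D (fun y => p y - q y) x = fokkerPlanck f D p x - fokkerPlanck f D q x := by
  simp only [fokkerPlanck_eq_sum_pd_flux hf hD (hp.sub hq), fokkerPlanck_eq_sum_pd_flux hf hD hp,
    fokkerPlanck_eq_sum_pd_flux hf hD hq, ← Finset.sum_sub_distrib,
    fokkerPlanckFlux_sub hD (hp.differentiable (by norm_num)) (hq.differentiable (by norm_num))]
  exact Finset.sum_congr rfl fun i _ => pd_sub i
    ((contDiff_fokkerPlanckFlux hf hD hp i).differentiable_one x)
    ((contDiff_fokkerPlanckFlux hf hD hq i).differentiable_one x)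

lemma continuous_fokkerPlanck (hf : ContDiff ℝ 1 f) (hD : ContDiff ℝ 2 D)
    (hq : ContDiff ℝ 2 q) : Continuous (fokkerPlanck f D q) := by
  rw [funext (fokkerPlanck_eq_sum_pd_flux hf hD hq)]
  exact continuous_finsetSum _ fun i _ =>
    ((contDiff_fokkerPlanckFlux hf hD hq i).pd (n := 0) i).continuous

lemma continuous_divb (hf : ContDiff ℝ 1 f) (hD : ContDiff ℝ 2 D) : Continuous (divb f D) :=
  continuous_finsetSum _ fun i _ => ((contDiff_bvec hf hD i).pd (n := 0) i).continuous


lemma integrable_sum_mul_pd_mul_pd (hD : Continuous D) (hq : ContDiff ℝ 1 q)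
    (hqs : HasCompactSupport q) (i : Fin d) :
    Integrable fun x => ∑ j, D x i j * pd i q x * pd j q x :=
  have hpdq : ∀ j, Continuous (pd j q) := fun j => (hq.pd (n := 0) j).continuous
  (continuous_finsetSum _ fun j _ =>
    ((continuous_apply_apply i j |>.comp hD).mul (hpdq i)).mul (hpdq j)
    ).integrable_of_eq_zero_off_tsupport hqs fun x hx => by
      simp [pd_of_notMem_tsupport i hx]

lemma integral_mul_pd_fokkerPlanckFlux (hf : ContDiff ℝ 1 f) (hD : ContDiff ℝ 2 D)
    (hq : ContDiff ℝ 2 q) (hqs : HasCompactSupport q) (i : Fin d) :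
    ∫ x, q x * pd i (fokkerPlanckFlux f D q i) x
      = (1 / 2) * (∫ x, pd i (fun y => bvec f D y i) x * q x ^ 2)
        - (1 / 2) * ∫ x, ∑ j, D x i j * pd i q x * pd j q x := by
  have hq1 : ContDiff ℝ 1 q := hq.of_le (by norm_num)
  have hpdq : ∀ j, Continuous (pd j q) := fun j => (hq1.pd (n := 0) j).continuous
  have hexpand : (fun x => pd i q x * fokkerPlanckFlux f D q i x)
      = fun x => bvec f D x i * (q x * pd i q x)
        + (1 / 2) * ∑ j, D x i j * pd i q x * pd j q x := funext fun x => by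
    rw [fokkerPlanckFlux_eq hD hq1.differentiable_one, mul_add, Finset.mul_sum, Finset.mul_sum,
      Finset.mul_sum]
    congr 1
    · ring
    · exact Finset.sum_congr rfl fun j _ => by ring
  have htransport : Integrable fun x => bvec f D x i * (q x * pd i q x) :=
    ((contDiff_bvec hf hD i).continuous.mul (hq.continuous.mul (hpdq i))
      ).integrable_of_eq_zero_off_tsupport hqs fun x hx => by
        simp [image_eq_zero_of_notMem_tsupport hx]
  rw [integral_mul_pd i hq1 (contDiff_fokkerPlanckFlux hf hD hq i)
      (hasCompactSupport_fokkerPlanckFlux hqs i), hexpand,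
    integral_add htransport ((integrable_sum_mul_pd_mul_pd hD.continuous hq1 hqs i).const_mul _),
    integral_const_mul,
    integral_mul_mul_pd_self i (contDiff_bvec hf hD i) hq1 hqs]
  ring

theorem integral_mul_fokkerPlanck_self (hf : ContDiff ℝ 1 f) (hD : ContDiff ℝ 2 D)
    (hq : ContDiff ℝ 2 q) (hqs : HasCompactSupport q) :
    ∫ x, q x * fokkerPlanck f D q x
      = (1 / 2) * (∫ x, divb f D x * q x ^ 2)
        - (1 / 2) * ∫ x, ∑ i, ∑ j, D x i j * pd i q x * pd j q x := by
  have hflux : ∀ i, Integrable fun x => q x * pd i (fokkerPlanckFlux f D q i) x := fun i =>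
    (hq.continuous.mul ((contDiff_fokkerPlanckFlux hf hD hq i).pd (n := 0) i).continuous
      ).integrable_of_hasCompactSupport ((hasCompactSupport_fokkerPlanckFlux hqs i).pd i).mul_left
  have hdiv : ∀ i, Integrable fun x => pd i (fun y => bvec f D y i) x * q x ^ 2 := fun i =>
    (((contDiff_bvec hf hD i).pd (n := 0) i).continuous.mul (hq.continuous.pow 2)
      ).integrable_of_eq_zero_off_tsupport hqs fun x hx => by
        simp [image_eq_zero_of_notMem_tsupport hx]
  simp only [fokkerPlanck_eq_sum_pd_flux hf hD hq, Finset.mul_sum]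
  rw [integral_finsetSum _ fun i _ => hflux i,
    Finset.sum_congr rfl fun i _ => integral_mul_pd_fokkerPlanckFlux hf hD hq hqs i,
    Finset.sum_sub_distrib, ← Finset.mul_sum, ← Finset.mul_sum,
    ← integral_finsetSum _ fun i _ => hdiv i, ← integral_finsetSum _ fun i _ =>
      integrable_sum_mul_pd_mul_pd hD.continuous (hq.of_le (by norm_num)) hqs i]
  simp only [divb, Finset.sum_mul]

variable {Ω : Set (Fin d → ℝ)} {C_D C_P C₀ : ℝ}

theorem div_mul_integral_sq_le_integral_sum_sum_mul_pd_mul_pd (hD : Continuous D)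
    (hq : ContDiff ℝ 1 q) (hqs : HasCompactSupport q) (hqΩ : tsupport q ⊆ Ω)
    (hCD : 0 ≤ C_D) (hCP : 0 < C_P)
    (hell : ∀ x ∈ Ω, ∀ ξ : Fin d → ℝ, C_D * ∑ i, ξ i ^ 2 ≤ ∑ i, ∑ j, D x i j * ξ i * ξ j)
    (hpoincare : ∫ x in Ω, q x ^ 2 ≤ C_P * ∫ x in Ω, ∑ i, pd i q x ^ 2) :
    C_D / C_P * ∫ x, q x ^ 2 ≤ ∫ x, ∑ i, ∑ j, D x i j * pd i q x * pd j q x := by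
  have hpdq0 : ∀ x ∉ Ω, ∀ i, pd i q x = 0 := fun x hx i =>
    pd_of_notMem_tsupport i fun h => hx (hqΩ h)
  have hpoincare' : ∫ x, q x ^ 2 ≤ C_P * ∫ x, ∑ i, pd i q x ^ 2 := by
    rwa [setIntegral_eq_integral_of_forall_compl_eq_zero fun x hx => by
        simp [image_eq_zero_of_notMem_tsupport fun h => hx (hqΩ h)],
      setIntegral_eq_integral_of_forall_compl_eq_zero fun x hx => by
        simp [hpdq0 x hx]] at hpoincare
  have hgrad : Integrable fun x => ∑ i, pd i q x ^ 2 :=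
    (continuous_finsetSum _ fun i _ => (hq.pd (n := 0) i).continuous.pow 2
      ).integrable_of_eq_zero_off_tsupport hqs fun x hx => by simp [pd_of_notMem_tsupport _ hx]
  have hgrad_le :
      C_D * ∫ x, ∑ i, pd i q x ^ 2 ≤ ∫ x, ∑ i, ∑ j, D x i j * pd i q x * pd j q x := by
    rw [← integral_const_mul]
    refine integral_mono (hgrad.const_mul _)
      (integrable_finsetSum _ fun i _ => integrable_sum_mul_pd_mul_pd hD hq hqs i) fun x => ?_
    by_cases hx : x ∈ Ω
    · exact hell x hx fun i => pd i q x
    · simp [hpdq0 x hx]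
  calc C_D / C_P * ∫ x, q x ^ 2
      ≤ C_D / C_P * (C_P * ∫ x, ∑ i, pd i q x ^ 2) := by gcongr
    _ = C_D * ∫ x, ∑ i, pd i q x ^ 2 := by field_simp
    _ ≤ _ := hgrad_le

theorem integral_mul_fokkerPlanck_self_le (hf : ContDiff ℝ 1 f) (hD : ContDiff ℝ 2 D)
    (hq : ContDiff ℝ 2 q) (hqs : HasCompactSupport q) (hqΩ : tsupport q ⊆ Ω)
    (hCD : 0 ≤ C_D) (hCP : 0 < C_P)
    (hell : ∀ x ∈ Ω, ∀ ξ : Fin d → ℝ, C_D * ∑ i, ξ i ^ 2 ≤ ∑ i, ∑ j, D x i j * ξ i * ξ j)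
    (hpoincare : ∫ x in Ω, q x ^ 2 ≤ C_P * ∫ x in Ω, ∑ i, pd i q x ^ 2)
    (hgap : ∀ x ∈ Ω, C₀ ≤ C_D / C_P - divb f D x) :
    ∫ x, q x * fokkerPlanck f D q x ≤ -(C₀ / 2) * ∫ x, q x ^ 2 := by
  have hdiv_le : ∫ x, divb f D x * q x ^ 2 ≤ (C_D / C_P - C₀) * ∫ x, q x ^ 2 := by
    have hq0 : ∀ x ∉ tsupport q, q x ^ 2 = 0 := fun x hx => by
      simp [image_eq_zero_of_notMem_tsupport hx]
    rw [← integral_const_mul]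
    refine integral_mono
      (((continuous_divb hf hD).mul (hq.continuous.pow 2)).integrable_of_eq_zero_off_tsupport
        hqs fun x hx => by simp [hq0 x hx])
      ((hq.continuous.pow 2).integrable_of_eq_zero_off_tsupport hqs hq0 |>.const_mul _)
      fun x => ?_
    by_cases hx : x ∈ Ω
    · exact mul_le_mul_of_nonneg_right (by linarith [hgap x hx]) (sq_nonneg _)
    · simp [hq0 x fun h => hx (hqΩ h)]
  have hdiffusion := div_mul_integral_sq_le_integral_sum_sum_mul_pd_mul_pd hD.continuous
    (hq.of_le (by norm_num)) hqs hqΩ hCD hCP hell hpoincare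
  rw [integral_mul_fokkerPlanck_self hf hD hq hqs]
  linarith

end FokkerPlanck

lemma sq_mul_integral_sq_le_of_le_integral_mul {α : Type*} [MeasurableSpace α] {μ : Measure α}
    {u v : α → ℝ} {c : ℝ} (hc : 0 ≤ c) (hu : Integrable (fun x => u x ^ 2) μ)
    (huv : Integrable (fun x => u x * v x) μ) (hv : Integrable (fun x => v x ^ 2) μ)
    (h : c / 2 * ∫ x, u x ^ 2 ∂μ ≤ ∫ x, u x * v x ∂μ) :
    c ^ 2 * ∫ x, u x ^ 2 ∂μ ≤ 4 * ∫ x, v x ^ 2 ∂μ := by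
  have young : c * ∫ x, u x * v x ∂μ ≤ c ^ 2 / 4 * ∫ x, u x ^ 2 ∂μ + ∫ x, v x ^ 2 ∂μ := by
    rw [← integral_const_mul, ← integral_const_mul, ← integral_add (hu.const_mul _) hv]
    exact integral_mono (huv.const_mul _) ((hu.const_mul _).add hv) fun x => by
      nlinarith [sq_nonneg (c * u x - 2 * v x)]
  nlinarith [mul_le_mul_of_nonneg_left h hc]

theorem stmt_4_general {d : ℕ}
    (Ω : Set (Fin d → ℝ))
    (f : (Fin d → ℝ) → Fin d → ℝ) (hf : ContDiff ℝ 1 f)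
    (D : (Fin d → ℝ) → Fin d → Fin d → ℝ) (hD : ContDiff ℝ 2 D)
    (C_D : ℝ) (hCD : 0 < C_D)
    (hell : ∀ x ∈ Ω, ∀ ξ : Fin d → ℝ,
      C_D * ∑ i, (ξ i) ^ 2 ≤ ∑ i, ∑ j, D x i j * ξ i * ξ j)
    (C_P : ℝ) (hCP : 0 < C_P)
    (hpoincare : ∀ u : (Fin d → ℝ) → ℝ, ContDiff ℝ 1 u → HasCompactSupport u →
      tsupport u ⊆ Ω → ∫ x in Ω, (u x) ^ 2 ≤ C_P * ∫ x in Ω, ∑ i, (pd i u x) ^ 2)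
    (C₀ : ℝ) (hC0 : 0 < C₀)
    (hgap : ∀ x ∈ Ω, C₀ ≤ C_D / C_P - divb f D x)
    (p p_N : (Fin d → ℝ) → ℝ)
    (hp : ContDiff ℝ 2 p) (hpsupp : HasCompactSupport p) (hpΩ : tsupport p ⊆ Ω)
    (hpN : ContDiff ℝ 2 p_N) (hpNsupp : HasCompactSupport p_N)
    (hpNΩ : tsupport p_N ⊆ Ω)
    (hsol : ∀ x ∈ Ω, fokkerPlanck f D p x = 0) :
    C₀ ^ 2 * ∫ x in Ω, (p x - p_N x) ^ 2
      ≤ 4 * ∫ x in Ω, (fokkerPlanck f D p_N x) ^ 2 := by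
  set e : (Fin d → ℝ) → ℝ := fun x => p x - p_N x with he_def
  change C₀ ^ 2 * ∫ x in Ω, e x ^ 2 ≤ _
  have he : ContDiff ℝ 2 e := hp.sub hpN
  have hes : HasCompactSupport e := hpsupp.sub hpNsupp
  have heΩ : tsupport e ⊆ Ω := (tsupport_sub p p_N).trans (Set.union_subset hpΩ hpNΩ)
  have he0 : ∀ x ∉ Ω, e x = 0 := fun x hx =>
    image_eq_zero_of_notMem_tsupport fun h => hx (heΩ h)
  have hcoercive := integral_mul_fokkerPlanck_self_le hf hD he hes heΩ hCD.le hCP hell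
    (hpoincare e (he.of_le (by norm_num)) hes heΩ) hgap
  have hresidual : ∀ x, e x * fokkerPlanck f D e x = -(e x * fokkerPlanck f D p_N x) := by
    intro x
    by_cases hx : x ∈ Ω
    · rw [he_def, fokkerPlanck_sub hf hD hp hpN, hsol x hx]; ring
    · rw [he0 x hx]; ring
  have hLpN : Continuous (fokkerPlanck f D p_N) := continuous_fokkerPlanck hf hD hpN
  rw [setIntegral_eq_integral_of_forall_compl_eq_zero fun x hx => by simp [he0 x hx],
    setIntegral_eq_integral_of_forall_compl_eq_zero fun x hx => by
      simp [fokkerPlanck_of_notMem_tsupport fun h => hx (hpNΩ h)]]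
  refine sq_mul_integral_sq_le_of_le_integral_mul hC0.le
    ((he.continuous.pow 2).integrable_of_eq_zero_off_tsupport hes fun x hx => by
      simp [image_eq_zero_of_notMem_tsupport hx])
    ((he.continuous.mul hLpN).integrable_of_hasCompactSupport hes.mul_right)
    ((hLpN.pow 2).integrable_of_eq_zero_off_tsupport hpNsupp fun x hx => by
      simp [fokkerPlanck_of_notMem_tsupport hx]) ?_
  rw [funext hresidual, integral_neg] at hcoercive
  linarith

/-- Error estimate: if `ℒp = 0` on `Ω`, then
`C₀² ∫_Ω (p - p_N)² ≤ 4 ∫_Ω (ℒ p_N)²`. -/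
theorem stmt_4 {d : ℕ} (hd : 1 ≤ d)
    (Ω : Set (Fin d → ℝ)) (hΩopen : IsOpen Ω) (hΩbdd : Bornology.IsBounded Ω)
    (f : (Fin d → ℝ) → Fin d → ℝ) (hf : ContDiff ℝ 1 f)
    (D : (Fin d → ℝ) → Fin d → Fin d → ℝ) (hD : ContDiff ℝ 2 D)
    (C_D : ℝ) (hCD : 0 < C_D)
    (hell : ∀ x ∈ Ω, ∀ ξ : Fin d → ℝ,
      C_D * ∑ i, (ξ i) ^ 2 ≤ ∑ i, ∑ j, D x i j * ξ i * ξ j)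
    (C_P : ℝ) (hCP : 0 < C_P)
    (hpoincare : ∀ u : (Fin d → ℝ) → ℝ, ContDiff ℝ 1 u → HasCompactSupport u →
      tsupport u ⊆ Ω → ∫ x in Ω, (u x) ^ 2 ≤ C_P * ∫ x in Ω, ∑ i, (pd i u x) ^ 2)
    (C₀ : ℝ) (hC0 : 0 < C₀)
    (hgap : ∀ x ∈ Ω, C₀ ≤ C_D / C_P - divb f D x)
    (p p_N : (Fin d → ℝ) → ℝ)
    (hp : ContDiff ℝ 2 p) (hpsupp : HasCompactSupport p) (hpΩ : tsupport p ⊆ Ω)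
    (hpN : ContDiff ℝ 2 p_N) (hpNsupp : HasCompactSupport p_N)
    (hpNΩ : tsupport p_N ⊆ Ω)
    (hsol : ∀ x ∈ Ω, fokkerPlanck f D p x = 0) :
    C₀ ^ 2 * ∫ x in Ω, (p x - p_N x) ^ 2
      ≤ 4 * ∫ x in Ω, (fokkerPlanck f D p_N x) ^ 2 :=
  stmt_4_general Ω f hf D hD C_D hCD hell C_P hCP hpoincare C₀ hC0 hgap p p_N hp hpsupp hpΩ hpN
    hpNsupp hpNΩ hsol
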